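/- arXiv:1704.07855 — 3 statements merged into one kernel-verified Lean document; each statement's English description precedes it below -/
import Mathlib

section
/- Let k be a field of characteristic p > 2 and W = W(k) its ring of Witt vectors. Consider the W-algebra A = W[b]/(b - p·b², 2 - 2·p·b). Then A is isomorphic to W[1/p] = Frac(W) as a W-algebra, and in particular A is not finitely generated as a W-module. -/
/-!
Both generators of the ideal are multiples of `p·b - 1`, one of them by the unit `-2`, so
`A = W[b]/(p·b - 1) = W[1/p]`. Inverting `p` already inverts every nonzero Witt vector: such a
vector is `V^m(u)` with `u` a unit, and `V^m(u) · V^m(u⁻¹) = V^{2m}(1) = p^{2m}`. Hence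
`W[1/p] = Frac W`, which is not finite over `W` because `W` is not a field.
-/

open Polynomial

/-- The ideal `(b - p·b², 2 - 2·p·b)` in `W(k)[b]`. -/
noncomputable def wittIdeal (p : ℕ) [Fact p.Prime] (k : Type*) [Field k] [CharP k p] :
    Ideal (Polynomial (WittVector p k)) :=
  Ideal.span {X - C (p : WittVector p k) * X ^ 2, C 2 - C (2 * (p : WittVector p k)) * X}

theorem Ideal.span_pair_mul_eq_span_singleton {R : Type*} [CommRing R] {u : R} (hu : IsUnit u)
    (a g : R) : Ideal.span {a * g, u * g} = Ideal.span {g} := by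
  obtain ⟨u, rfl⟩ := hu
  refine le_antisymm ?_ ?_
  · rw [Ideal.span_le, Set.pair_subset_iff]
    exact ⟨Ideal.mul_mem_left _ _ (Ideal.mem_span_singleton_self g),
      Ideal.mul_mem_left _ _ (Ideal.mem_span_singleton_self g)⟩
  · have hug : u * g ∈ Ideal.span {a * g, u * g} := Ideal.subset_span (by simp)
    rw [Ideal.span_singleton_le_iff_mem]
    simpa using Ideal.mul_mem_left _ (↑u⁻¹ : R) hug

theorem IsFractionRing.isLocalization_away_of_forall_dvd_pow {R K : Type*} [CommRing R]
    [IsDomain R] [CommRing K] [Algebra R K] [IsFractionRing R K] {x : R} (hx : x ≠ 0)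
    (h : ∀ a : R, a ≠ 0 → ∃ n : ℕ, a ∣ x ^ n) : IsLocalization.Away x K :=
  (IsLocalization.iff_of_le_of_exists_dvd (Submonoid.powers x) (nonZeroDivisors R)
    (powers_le_nonZeroDivisors_of_noZeroDivisors hx) fun a ha ↦
      have ⟨n, hn⟩ := h a (nonZeroDivisors.ne_zero ha)
      ⟨x ^ n, ⟨n, rfl⟩, hn⟩).mpr inferInstance

theorem IsFractionRing.not_finite_of_not_isField {R K : Type*} [CommRing R] [IsDomain R]
    [Field K] [Algebra R K] [IsFractionRing R K] (hR : ¬IsField R) : ¬Module.Finite R K := by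
  intro _
  exact hR <| (Algebra.IsIntegral.isField_iff_isField (IsFractionRing.injective R K)).mpr
    (Field.toIsField K)

namespace WittVector

variable (p : ℕ) [Fact p.Prime]

theorem iterate_verschiebung_one {R : Type*} [CommRing R] [CharP R p] (n : ℕ) :
    verschiebung^[n] (1 : WittVector p R) = (p : WittVector p R) ^ n := by
  induction n with
  | zero => simp
  | succ n ih =>
    calc verschiebung^[n + 1] (1 : WittVector p R)
        = verschiebung (1 * frobenius ((p : WittVector p R) ^ n)) := by
          rw [Function.iterate_succ_apply', ih, one_mul, map_pow frobenius, map_natCast frobenius]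
      _ = verschiebung (frobenius 1) * (p : WittVector p R) ^ n := by
          rw [verschiebung_mul_frobenius, map_one frobenius]
      _ = (p : WittVector p R) ^ (n + 1) := by
          rw [verschiebung_frobenius, one_mul, pow_succ']

variable {k : Type*} [Field k] [CharP k p]

theorem isUnit_natCast {n : ℕ} (hn : ¬p ∣ n) : IsUnit (n : WittVector p k) := by
  apply isUnit_of_coeff_zero_ne_zero
  rw [← constantCoeff_apply, map_natCast, Ne, CharP.cast_eq_zero_iff k p]
  exact hn

theorem exists_dvd_p_pow {a : WittVector p k} (ha : a ≠ 0) :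
    ∃ n : ℕ, a ∣ (p : WittVector p k) ^ n := by
  obtain ⟨m, c, hc, rfl⟩ := verschiebung_nonzero ha
  obtain ⟨u, rfl⟩ := isUnit_of_coeff_zero_ne_zero c hc
  refine ⟨m + m, verschiebung^[m] (u⁻¹ : (WittVector p k)ˣ), ?_⟩
  rw [iterate_verschiebung_mul, ← iterate_map_mul, Units.mul_inv, iterate_map_one,
    iterate_verschiebung_one]

theorem not_isField : ¬IsField (WittVector p k) := fun h ↦
  have ⟨_, hc⟩ := h.mul_inv_cancel (irreducible p).ne_zero
  (irreducible p).not_isUnit (.of_mul_eq_one _ hc)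

instance isLocalization_away_p_fractionRing :
    IsLocalization.Away (p : WittVector p k) (FractionRing (WittVector p k)) :=
  IsFractionRing.isLocalization_away_of_forall_dvd_pow (p_nonzero p k)
    fun _ ↦ exists_dvd_p_pow p

end WittVector

theorem wittIdeal_eq_span_singleton (p : ℕ) [Fact p.Prime] (hp : 2 < p) (k : Type*) [Field k]
    [CharP k p] : wittIdeal p k = Ideal.span {C (p : WittVector p k) * X - 1} := by
  have h2 : IsUnit (2 : WittVector p k) := by
    exact_mod_cast WittVector.isUnit_natCast p fun h ↦ (Nat.le_of_dvd two_pos h).not_gt hp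
  rw [← Ideal.span_pair_mul_eq_span_singleton (h2.map C).neg (-X), wittIdeal]
  congr 3
  · ring
  · rw [map_mul]
    ring

theorem isLocalization_away_wittIdeal_quotient (p : ℕ) [Fact p.Prime] (hp : 2 < p) (k : Type*)
    [Field k] [CharP k p] :
    IsLocalization.Away (p : WittVector p k) ((WittVector p k)[X] ⧸ wittIdeal p k) := by
  rw [wittIdeal_eq_span_singleton p hp k]
  exact IsLocalization.adjoin_inv _

/-- Let `k` be a field of characteristic `p > 2` and `W = W(k)`. Then the `W`-algebra
`A = W[b]/(b - p·b², 2 - 2·p·b)` is isomorphic to `Frac(W) = W[1/p]` as a `W`-algebra,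
and in particular `A` is not finitely generated as a `W`-module. -/
theorem wittIdeal_quotient_iso_fractionRing (p : ℕ) [Fact p.Prime] (hp : 2 < p)
    (k : Type*) [Field k] [CharP k p] :
    Nonempty ((Polynomial (WittVector p k) ⧸ wittIdeal p k) ≃ₐ[WittVector p k]
        FractionRing (WittVector p k)) ∧
      ¬ Module.Finite (WittVector p k) (Polynomial (WittVector p k) ⧸ wittIdeal p k) := by
  have := isLocalization_away_wittIdeal_quotient p hp k
  let e := IsLocalization.algEquiv (Submonoid.powers (p : WittVector p k))
    ((WittVector p k)[X] ⧸ wittIdeal p k) (FractionRing (WittVector p k))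
  exact ⟨⟨e⟩, fun _ ↦ IsFractionRing.not_finite_of_not_isField (WittVector.not_isField p)
    (Module.Finite.equiv e.toLinearEquiv)⟩
end

section
/- Let A be a commutative graded ring, R₀ a subring of A₀, and f₁,…,f_m homogeneous elements of A of positive degrees such that A is module-finite over the subring generated by R₀ and the fᵢ. Then for any positive integers N₁,…,N_m, A is module-finite over the subring generated by R₀ and f₁^{N₁},…,f_m^{N_m}. -/
/-!
Since `f i ^ N i` lies in `T = R₀[f₁^{N₁}, …, f_m^{N_m}]`, each `f i` is a root of the monic
polynomial `X ^ N i - f i ^ N i` over `T`, so `T[f₁, …, f_m]` is module-finite over `T`.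
It contains `R₀[f₁, …, f_m]`, over which `A` is module-finite, hence `A` is
module-finite over `T[f₁, …, f_m]` and, by transitivity, over `T`.
-/

theorem Module.Finite.of_subring_le {A : Type*} [CommRing A] {S S' : Subring A} (h : S ≤ S')
    [Module.Finite S A] : Module.Finite S' A :=
  letI : SMul S S' := ⟨fun s t => Subring.inclusion h s * t⟩
  haveI : IsScalarTower S S' A := ⟨fun s t a => mul_assoc (s : A) t a⟩
  .of_restrictScalars_finite S S' A

theorem Algebra.finite_adjoin_of_pow_mem_range {R A ι : Type*} [CommRing R] [CommRing A]
    [Algebra R A] [Finite ι] (f : ι → A) (N : ι → ℕ) (hN : ∀ i, 0 < N i)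
    (hpow : ∀ i, f i ^ N i ∈ (algebraMap R A).range) :
    Module.Finite R (Algebra.adjoin R (Set.range f)) := by
  refine Algebra.finite_adjoin_of_finite_of_isIntegral (Set.finite_range f) ?_
  rintro _ ⟨i, rfl⟩
  obtain ⟨r, hr⟩ := hpow i
  exact IsIntegral.of_pow (hN i) (hr ▸ isIntegral_algebraMap)

theorem module_finite_over_powers_of_homogeneous_general
    {A : Type*} [CommRing A]
    (R₀ : Subring A)
    {m : ℕ} (f : Fin m → A)
    (hfin : Module.Finite (Subring.closure ((R₀ : Set A) ∪ Set.range f)) A)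
    (N : Fin m → ℕ) (hN : ∀ i, 0 < N i) :
    Module.Finite (Subring.closure ((R₀ : Set A) ∪ Set.range fun i => f i ^ N i)) A := by
  set T := Subring.closure ((R₀ : Set A) ∪ Set.range fun i => f i ^ N i)
  have hR₀T : (R₀ : Set A) ⊆ T := fun x hx => Subring.subset_closure (Or.inl hx)
  have hpowT (i : Fin m) : f i ^ N i ∈ T := Subring.subset_closure (Or.inr ⟨i, rfl⟩)
  let B := Algebra.adjoin T (Set.range f)
  have hB : Module.Finite T B :=
    Algebra.finite_adjoin_of_pow_mem_range f N hN fun i => ⟨⟨_, hpowT i⟩, rfl⟩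
  have hle : Subring.closure ((R₀ : Set A) ∪ Set.range f) ≤ B.toSubring := by
    rw [Algebra.adjoin_eq_ring_closure]
    exact Subring.closure_mono
      (Set.union_subset_union_left _ fun x hx => ⟨⟨x, hR₀T hx⟩, rfl⟩)
  have hA : Module.Finite B A := Module.Finite.of_subring_le hle
  exact Module.Finite.trans B A

/-- Let `A` be a commutative graded ring, `R₀` a subring of `A₀`, and `f₁, …, f_m`
homogeneous elements of positive degrees such that `A` is module-finite over
`R₀[f₁, …, f_m]`. Then for any positive integers `N₁, …, N_m`, `A` is module-finite
over `R₀[f₁^{N₁}, …, f_m^{N_m}]`. -/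
theorem module_finite_over_powers_of_homogeneous
    {A : Type*} [CommRing A] (𝒜 : ℕ → AddSubgroup A) [GradedRing 𝒜]
    (R₀ : Subring A) (hR₀ : (R₀ : Set A) ⊆ 𝒜 0)
    {m : ℕ} (f : Fin m → A) (d : Fin m → ℕ) (hdpos : ∀ i, 0 < d i)
    (hf : ∀ i, f i ∈ 𝒜 (d i))
    (hfin : Module.Finite (Subring.closure ((R₀ : Set A) ∪ Set.range f)) A)
    (N : Fin m → ℕ) (hN : ∀ i, 0 < N i) :
    Module.Finite (Subring.closure ((R₀ : Set A) ∪ Set.range fun i => f i ^ N i)) A :=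
  module_finite_over_powers_of_homogeneous_general R₀ f hfin N hN
end

section
/- Let k be a field, A a finitely generated commutative k-algebra graded by the nonnegative integers with A₀ = k, and let S be a finite group acting on A by graded k-algebra automorphisms with |S| invertible in k. Then A is module-finite over the invariant subalgebra A^S, and A^S is a finitely generated k-algebra. -/
/-!
Every `a : A` is a root of the monic polynomial `∏ s, (X - s • a)`, whose coefficients are
`S`-invariant, so `A` is integral over `A^S`; being of finite type, it is then module-finite.
The Artin–Tate lemma for `k ⊆ A^S ⊆ A` then shows that `A^S` is of finite type over `k`.
-/

/-- The subalgebra of `S`-invariants of an algebra with an action of `S` by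
`k`-algebra automorphisms. -/
def invariantSubalgebra (k : Type*) [CommSemiring k] (A : Type*) [CommRing A] [Algebra k A]
    (S : Type*) [Group S] [MulSemiringAction S A] [SMulCommClass S k A] :
    Subalgebra k A where
  carrier := {a : A | ∀ s : S, s • a = a}
  mul_mem' := fun {a b} ha hb s => by rw [smul_mul', ha s, hb s]
  add_mem' := fun {a b} ha hb s => by rw [smul_add, ha s, hb s]
  algebraMap_mem' := fun r s => by
    rw [Algebra.algebraMap_eq_smul_one, smul_comm, smul_one]

namespace invariantSubalgebra

variable (k : Type*) [CommRing k] (A : Type*) [CommRing A] [Algebra k A]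
  (S : Type*) [Group S] [MulSemiringAction S A] [SMulCommClass S k A]

instance isInvariant : Algebra.IsInvariant (invariantSubalgebra k A S) A S :=
  ⟨fun a ha => ⟨⟨a, ha⟩, rfl⟩⟩

theorem finite [Finite S] [Algebra.FiniteType k A] :
    Module.Finite (invariantSubalgebra k A S) A :=
  have : Algebra.IsIntegral (invariantSubalgebra k A S) A :=
    Algebra.IsInvariant.isIntegral _ A S
  have : Algebra.FiniteType (invariantSubalgebra k A S) A :=
    Algebra.FiniteType.of_restrictScalars_finiteType k _ A
  Algebra.IsIntegral.finite

theorem finiteType [IsNoetherianRing k] [Finite S] [Algebra.FiniteType k A] :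
    Algebra.FiniteType k (invariantSubalgebra k A S) :=
  ⟨fg_of_fg_of_fg k _ A Algebra.FiniteType.out (finite k A S).fg_top Subtype.val_injective⟩

end invariantSubalgebra

theorem noether_finiteness_of_invariants_general
    (k : Type*) [Field k] (A : Type*) [CommRing A] [Algebra k A] [Algebra.FiniteType k A]
    (S : Type*) [Group S] [Finite S] [MulSemiringAction S A] [SMulCommClass S k A] :
    Module.Finite (invariantSubalgebra k A S) A ∧
      Algebra.FiniteType k (invariantSubalgebra k A S) :=
  ⟨invariantSubalgebra.finite k A S, invariantSubalgebra.finiteType k A S⟩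

/-- Noether's theorem: let `k` be a field, `A` a finitely generated commutative graded
`k`-algebra with `A₀ = k`, and `S` a finite group acting on `A` by graded `k`-algebra
automorphisms with `|S|` invertible in `k`. Then `A` is module-finite over the invariant
subalgebra `A^S`, and `A^S` is a finitely generated `k`-algebra. -/
theorem noether_finiteness_of_invariants
    (k : Type*) [Field k] (A : Type*) [CommRing A] [Algebra k A] [Algebra.FiniteType k A]
    (𝒜 : ℕ → Submodule k A) [GradedAlgebra 𝒜]
    (h0 : 𝒜 0 = (1 : Submodule k A))
    (S : Type*) [Group S] [Finite S] [MulSemiringAction S A] [SMulCommClass S k A]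
    (hgraded : ∀ (s : S) (n : ℕ), ∀ a ∈ 𝒜 n, s • a ∈ 𝒜 n)
    (hcard : (Nat.card S : k) ≠ 0) :
    Module.Finite (invariantSubalgebra k A S) A ∧
      Algebra.FiniteType k (invariantSubalgebra k A S) :=
  noether_finiteness_of_invariants_general k A S
end
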